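/- arXiv:2502.00260 — 6 statements merged into one kernel-verified Lean document; each statement's English description precedes it below -/
import Mathlib

section
/- If a strategy profile Σ is an ex-ante Bayesian k-strong equilibrium, then Σ is a Bayesian k-strong equilibrium. -/
/-- If a strategy profile Σ is an ex-ante Bayesian k-strong equilibrium,
then Σ is a Bayesian k-strong equilibrium. -/
theorem exante_k_strong_implies_bayesian_k_strong
    (n k : ℕ)
    (T : Fin n → Type) [∀ i, Fintype (T i)]
    (Strat : Fin n → Type)
    (Q : ∀ i : Fin n, T i → ℝ)
    (hQ : ∀ (i : Fin n) (s : T i), 0 < Q i s)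
    (uI : (∀ i : Fin n, Strat i) → ∀ i : Fin n, T i → ℝ)
    (u : (∀ i : Fin n, Strat i) → Fin n → ℝ)
    (hu : ∀ (Sp : ∀ i : Fin n, Strat i) (i : Fin n),
        u Sp i = ∑ s : T i, Q i s * uI Sp i s)
    (Sp : ∀ i : Fin n, Strat i)
    -- Sp is an ex-ante Bayesian k-strong equilibrium
    (hE : ¬ ∃ (D : Finset (Fin n)) (S' : ∀ i : Fin n, Strat i),
        D.card ≤ k ∧ S' ≠ Sp ∧
        (∀ i, i ∉ D → S' i = Sp i) ∧
        (∀ i ∈ D, u Sp i ≤ u S' i) ∧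
        (∃ i ∈ D, u Sp i < u S' i)) :
    -- Sp is a Bayesian k-strong equilibrium
    ¬ ∃ (D : Finset (Fin n)) (S' : ∀ i : Fin n, Strat i),
        D.card ≤ k ∧ S' ≠ Sp ∧
        (∀ i, i ∉ D → S' i = Sp i) ∧
        (∀ i ∈ D, ∀ s : T i, uI Sp i s ≤ uI S' i s) ∧
        (∃ i ∈ D, ∃ s : T i, uI Sp i s < uI S' i s) := by
  rintro ⟨D, S', hcard, hne, hout, hweak, i, hiD, s, hs⟩
  apply hE
  refine ⟨D, S', hcard, hne, hout, ?_, ⟨i, hiD, ?_⟩⟩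
  · intro j hj
    rw [hu, hu]
    exact Finset.sum_le_sum fun t _ =>
      mul_le_mul_of_nonneg_left (hweak j hj t) (hQ j t).le
  · rw [hu, hu]
    apply Finset.sum_lt_sum
    · exact fun t _ => mul_le_mul_of_nonneg_left (hweak i hiD t) (hQ i t).le
    · exact ⟨s, Finset.mem_univ s, mul_lt_mul_of_pos_left hs (hQ i s)⟩
end

section
/- The function f(β_ℓ, β_h) giving the expected reward of an agent playing strategy (β_ℓ, β_h) from a peer playing the same strategy, in the peer prediction mechanism with a strictly proper scoring rule, is convex on [0,1]². -/
set_option maxHeartbeats 1000000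


/-- A probability distribution on `Bool` (`true` = h, `false` = ℓ). -/
def IsDist (p : Bool → ℝ) : Prop :=
  0 ≤ p true ∧ 0 ≤ p false ∧ p true + p false = 1

/-- Probability that an agent with signal `s` playing the strategy
(βℓ, βh) = (x, y) makes report `r` (`true` = report h). -/
def reportProb (x y : ℝ) (s r : Bool) : ℝ :=
  if r then (if s then y else x) else 1 - (if s then y else x)

/-- `f(βℓ, βh)`: the expected reward of an agent playing strategy
`v = (βℓ, βh)` from a peer playing the same strategy, in the peer prediction
mechanism with prior `prior`, conditionals `cond s' = P(·|s')`, and scoring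
rule `PS` (the reward against report r' is `PS r (cond r')`). -/
noncomputable def selfPairReward (prior : Bool → ℝ) (cond : Bool → Bool → ℝ)
    (PS : Bool → (Bool → ℝ) → ℝ) (v : ℝ × ℝ) : ℝ :=
  ∑ s' : Bool, ∑ r' : Bool, ∑ s : Bool, ∑ r : Bool,
    prior s' * reportProb v.1 v.2 s' r' * cond s' s * reportProb v.1 v.2 s r
      * PS r (cond r')

/-- the function f giving the expected reward of an agent playing
strategy (βℓ, βh) against a peer playing the same strategy is convex on
[0,1]². -/
theorem selfPairReward_convexOn
    (prior : Bool → ℝ) (cond : Bool → Bool → ℝ)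
    (PS : Bool → (Bool → ℝ) → ℝ)
    (hprior : IsDist prior)
    (hcondh : IsDist (cond true)) (hcondl : IsDist (cond false))
    (hpriorpos : 0 < prior true ∧ 0 < prior false)
    (hcorr : cond false true < cond true true)
    (hpos1 : 0 < cond false true) (hpos2 : 0 < cond true false)
    (hbayes : prior false * cond false true = prior true * cond true false)
    -- PS is strictly proper
    (hstrict : ∀ p q : Bool → ℝ, IsDist p → IsDist q → p ≠ q →
        p true * PS true q + p false * PS false q
          < p true * PS true p + p false * PS false p) :
    ConvexOn ℝ (Set.Icc ((0, 0) : ℝ × ℝ) (1, 1))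
      (selfPairReward prior cond PS) := by
  obtain ⟨hph0, hpl0, hpsum⟩ := hprior
  obtain ⟨hqhh0, hqhl0, hqhsum⟩ := hcondh
  obtain ⟨hqlh0, hqll0, hqlsum⟩ := hcondl
  set ph := prior true with hph
  set qhh := cond true true with hqhh
  set qlh := cond false true with hqlh
  set A := PS true (cond true) with hA
  set B := PS false (cond true) with hB
  set C := PS true (cond false) with hC
  set D := PS false (cond false) with hD
  have hpl : prior false = 1 - ph := by linarith
  have hqhl : cond true false = 1 - qhh := by linarith
  have hqll : cond false false = 1 - qlh := by linarith
  -- c > 0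
  have hne : cond true ≠ cond false := by
    intro h
    have := congrFun h true
    rw [← hqhh, ← hqlh] at this
    linarith
  have h1 := hstrict (cond true) (cond false) ⟨hqhh0, hqhl0, hqhsum⟩ ⟨hqlh0, hqll0, hqlsum⟩ hne
  have h2 := hstrict (cond false) (cond true) ⟨hqlh0, hqll0, hqlsum⟩ ⟨hqhh0, hqhl0, hqhsum⟩ hne.symm
  rw [← hqhh, hqhl, ← hA, ← hB, ← hC, ← hD] at h1
  rw [← hqlh, hqll, ← hA, ← hB, ← hC, ← hD] at h2
  have hc : 0 < A + D - B - C := by nlinarith [h1, h2, hcorr]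
  -- expansion
  have expand : ∀ x y : ℝ, selfPairReward prior cond PS (x, y) =
      ph * y * (qhh * (y * A + (1-y) * B) + (1-qhh) * (x * A + (1-x) * B))
    + ph * (1-y) * (qhh * (y * C + (1-y) * D) + (1-qhh) * (x * C + (1-x) * D))
    + (1-ph) * x * (qlh * (y * A + (1-y) * B) + (1-qlh) * (x * A + (1-x) * B))
    + (1-ph) * (1-x) * (qlh * (y * C + (1-y) * D) + (1-qlh) * (x * C + (1-x) * D)) := by
    intro x y
    simp only [selfPairReward, reportProb, Fintype.sum_bool]
    norm_num
    rw [hpl, hqhl, hqll, ← hph, ← hqhh, ← hqlh, ← hA, ← hB, ← hC, ← hD]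
    ring
  refine ⟨convex_Icc _ _, ?_⟩
  rintro ⟨u1, u2⟩ hu ⟨w1, w2⟩ hw a b ha hb hab
  have hb' : b = 1 - a := by linarith
  have hmix : a • ((u1, u2) : ℝ × ℝ) + b • ((w1, w2) : ℝ × ℝ)
      = ((a * u1 + b * w1 : ℝ), (a * u2 + b * w2 : ℝ)) := by
    simp [Prod.ext_iff]
  rw [hmix, expand, expand, expand, smul_eq_mul, smul_eq_mul]
  have hbayes' : (1 - ph) * qlh = ph * (1 - qhh) := by
    rw [← hpl, ← hqhl]; exact hbayes
  have hQ : 0 ≤ (1-ph) * (1-qlh) * (u1-w1)^2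
      + ((1-ph) * qlh + ph * (1-qhh)) * (u1-w1) * (u2-w2)
      + ph * qhh * (u2-w2)^2 := by
    have hphpos : 0 < ph := hpriorpos.1
    have hplpos : 0 < 1 - ph := by rw [← hpl]; exact hpriorpos.2
    have hqllpos : 0 < 1 - qlh := by linarith
    have hid : (1-ph) * (1-qlh) * ((1-ph) * (1-qlh) * (u1-w1)^2
        + ((1-ph) * qlh + ph * (1-qhh)) * (u1-w1) * (u2-w2)
        + ph * qhh * (u2-w2)^2) =
        ((1-ph) * (1-qlh) * (u1-w1) + (1-ph) * qlh * (u2-w2))^2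
        + (1-ph) * ph * (qhh - qlh) * (u2-w2)^2 := by
      linear_combination (-((1-ph)*(1-qlh)*(u1-w1)*(u2-w2) + (1-ph)*qlh*(u2-w2)^2)) * hbayes'
    nlinarith [sq_nonneg ((1-ph) * (1-qlh) * (u1-w1) + (1-ph) * qlh * (u2-w2)),
      mul_pos hplpos hqllpos,
      mul_nonneg (mul_nonneg (mul_nonneg hplpos.le hphpos.le)
        (by linarith : (0:ℝ) ≤ qhh - qlh)) (sq_nonneg (u2-w2))]
  rw [hb']
  rw [← sub_nonneg]
  have hQc : 0 ≤ a * (1-a) * ((A + D - B - C) * ((1-ph) * (1-qlh) * (u1-w1)^2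
      + ((1-ph) * qlh + ph * (1-qhh)) * (u1-w1) * (u2-w2)
      + ph * qhh * (u2-w2)^2)) :=
    mul_nonneg (mul_nonneg ha (by linarith)) (mul_nonneg hc.le hQ)
  exact hQc.trans_eq (by ring)
end

section
/- In the peer prediction mechanism, if PS(h, p_h) ≤ PS(ℓ, p_h), then for every group size k ≤ n, the deviation where all k deviators always report h gives each deviator ex-ante expected utility at most the truthful ex-ante expected utility. -/
/-- Truthful ex-ante expected utility: u* = Σ_{s,s'} P(s)·P(s'|s)·PS(s', p_s). -/
noncomputable def truthfulUtil (prior : Bool → ℝ) (cond : Bool → Bool → ℝ)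
    (PS : Bool → (Bool → ℝ) → ℝ) : ℝ :=
  ∑ s : Bool, ∑ s' : Bool, prior s * cond s s' * PS s' (cond s)

/-- Ex-ante expected utility of a deviator when all k deviators always report h
and the other n−k agents are truthful. -/
noncomputable def allHDevUtil (prior : Bool → ℝ) (cond : Bool → Bool → ℝ)
    (PS : Bool → (Bool → ℝ) → ℝ) (n k : ℕ) : ℝ :=
  (((n : ℝ) - (k : ℝ)) / ((n : ℝ) - 1))
      * (∑ s : Bool, ∑ s' : Bool, prior s * cond s s' * PS s' (cond true))
    + (((k : ℝ) - 1) / ((n : ℝ) - 1)) * PS true (cond true)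

/-- if PS(h,p_h) ≤ PS(ℓ,p_h), then for every group size k ≤ n the
all-h deviation gives each deviator ex-ante expected utility at most the
truthful ex-ante expected utility. -/
theorem allH_deviation_never_succeeds
    (prior : Bool → ℝ) (cond : Bool → Bool → ℝ)
    (PS : Bool → (Bool → ℝ) → ℝ)
    (n : ℕ) (hn : 2 ≤ n)
    (hprior : IsDist prior)
    (hpriorh : 0 < prior true) (hpriorl : 0 < prior false)
    (hcondh : IsDist (cond true)) (hcondl : IsDist (cond false))
    (hcorr : cond false true < cond true true)
    -- PS is (weakly) proper
    (hproper : ∀ p q : Bool → ℝ, IsDist p → IsDist q →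
        p true * PS true q + p false * PS false q
          ≤ p true * PS true p + p false * PS false p)
    (hps : PS true (cond true) ≤ PS false (cond true)) :
    ∀ k : ℕ, 1 ≤ k → k ≤ n →
      allHDevUtil prior cond PS n k ≤ truthfulUtil prior cond PS := by
  intro k hk1 hkn
  obtain ⟨hpt, hpf, hp1⟩ := hprior
  obtain ⟨hht, hhf, hh1⟩ := hcondh
  obtain ⟨hlt, hlf, hl1⟩ := hcondl
  have hprop := hproper (cond false) (cond true) ⟨hlt, hlf, hl1⟩ ⟨hht, hhf, hh1⟩
  have hn1 : (1:ℝ) ≤ (n:ℝ) - 1 := by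
    have h2 : (2:ℝ) ≤ (n:ℝ) := by exact_mod_cast hn
    linarith
  have hd : (0:ℝ) < (n:ℝ) - 1 := by linarith
  have hk1' : (1:ℝ) ≤ (k:ℝ) := by exact_mod_cast hk1
  have hkn' : (k:ℝ) ≤ (n:ℝ) := by exact_mod_cast hkn
  unfold allHDevUtil truthfulUtil
  simp only [Fintype.sum_bool]
  set a := PS true (cond true) with ha
  set b := PS false (cond true) with hb
  set c := PS true (cond false) with hc
  set e := PS false (cond false) with he
  set S := prior true * cond true true * a + prior true * cond true false * b
    + (prior false * cond false true * a + prior false * cond false false * b) with hS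
  set U := prior true * cond true true * a + prior true * cond true false * b
    + (prior false * cond false true * c + prior false * cond false false * e) with hU
  have hSU : S ≤ U := by
    have := mul_le_mul_of_nonneg_left hprop hpf
    simp only [hS, hU]; nlinarith
  have hid : S - a = prior true * cond true false * (b - a)
      + prior false * cond false false * (b - a) := by
    rw [hS]
    linear_combination a * prior true * hh1 + a * prior false * hl1 + a * hp1
  have haS : a ≤ S := by
    have h := sub_nonneg.2 hps
    linarith [mul_nonneg (mul_nonneg hpt hhf) h, mul_nonneg (mul_nonneg hpf hlf) h]
  set α := ((n:ℝ) - (k:ℝ)) / ((n:ℝ) - 1) with hα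
  set β := ((k:ℝ) - 1) / ((n:ℝ) - 1) with hβ
  have hα0 : 0 ≤ α := div_nonneg (by linarith) hd.le
  have hβ0 : 0 ≤ β := div_nonneg (by linarith) hd.le
  have hαβ : α + β = 1 := by
    rw [hα, hβ, ← add_div]; field_simp; ring
  have hU1 : α * U + β * U = U := by rw [← add_mul, hαβ, one_mul]
  nlinarith [mul_le_mul_of_nonneg_left hSU hα0, mul_le_mul_of_nonneg_left haS hβ0,
    mul_le_mul_of_nonneg_left hSU hβ0]
end

section
/- For any (β̄_ℓ, β̄_h) ∈ ℝ² with β̄_ℓ ≥ 0, β̄_h ≥ 0, and β̄_h + (P(ℓ|h)/P(h|h))·β̄_ℓ ≤ 1, the interim expected utility u(β̄_ℓ, β̄_h | h) of a deviator with signal h (when all k ≤ k_B deviators play the common strategy (β̄_ℓ, β̄_h) and others are truthful) satisfies u(β̄_ℓ, β̄_h | h) ≤ u(Σ* | h), with equality only at (β̄_ℓ, β̄_h) = (0, 1). -/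
open scoped Classical

set_option maxHeartbeats 1000000

/-- `f^h(β'_h, (βℓ, βh))`: the expected score of an agent with signal h who
reports h with probability `b'`, against a peer playing strategy
`(x, y) = (βℓ, βh)`.  `cond s' = P(·|s')`. -/
noncomputable def fH (PS : Bool → (Bool → ℝ) → ℝ) (cond : Bool → Bool → ℝ)
    (b' x y : ℝ) : ℝ :=
  b' * ((cond true true * y + cond true false * x) * PS true (cond true)
        + (1 - (cond true true * y + cond true false * x)) * PS false (cond true))
  + (1 - b') * ((cond true true * y + cond true false * x) * PS true (cond false)
        + (1 - (cond true true * y + cond true false * x)) * PS false (cond false))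

/-- Interim expected utility `u(βℓ, βh | h)` of a deviator with signal h when
all k deviators play the common strategy `(x, y)` and the other n−k agents are
truthful. -/
noncomputable def uDevH (PS : Bool → (Bool → ℝ) → ℝ) (cond : Bool → Bool → ℝ)
    (n k : ℕ) (x y : ℝ) : ℝ :=
  (((n : ℝ) - (k : ℝ)) / ((n : ℝ) - 1)) * fH PS cond y 0 1
    + (((k : ℝ) - 1) / ((n : ℝ) - 1)) * fH PS cond y x y

/-- Truthful interim expected utility conditioned on signal h. -/
noncomputable def uStarH (PS : Bool → (Bool → ℝ) → ℝ)
    (cond : Bool → Bool → ℝ) : ℝ :=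
  cond true true * PS true (cond true) + cond true false * PS false (cond true)

/-- The Bayesian k-strong equilibrium threshold k_B = min(k_B^h, k_B^ℓ, n). -/
noncomputable def kBthreshold (PS : Bool → (Bool → ℝ) → ℝ)
    (cond : Bool → Bool → ℝ) (n : ℕ) : ℝ :=
  let ph := cond true
  let pl := cond false
  let El := pl true * (PS true pl - PS true ph) + pl false * (PS false pl - PS false ph)
  let Eh := ph true * (PS true ph - PS true pl) + ph false * (PS false ph - PS false pl)
  let kBh : ℝ := if PS false ph < PS true ph
    then (⌈((n : ℝ) - 1) * El / (pl false * (PS true ph - PS false ph))⌉ : ℝ)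
    else (n : ℝ)
  let kBl : ℝ := if PS true pl < PS false pl
    then (⌈((n : ℝ) - 1) * Eh / (ph true * (PS false pl - PS true pl))⌉ : ℝ)
    else (n : ℝ)
  min (min kBh kBl) (n : ℝ)


/-- Arithmetic core of the h-side deviation lemma, over plain reals. -/
lemma aux_h_side_core (a b A B C D x y N K : ℝ)
    (hb : 0 ≤ b) (hx : 0 ≤ x) (hy : 0 ≤ y)
    (h2 : a * y + b * x ≤ a) (hy1 : y ≤ 1)
    (hN : 0 < N) (hK : 0 ≤ K)
    (hU : 0 < A - C) (hv : 0 < D - B)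
    (hE : a * C + b * D < a * A + b * B)
    (hkBl : C < D → K * (a * (D - C)) < N * (a * (A - C) + b * (B - D))) :
    0 ≤ N * (1 - y) * (a * A + b * B - (a * C + b * D))
        + K * (a - (a * y + b * x)) * ((C - D) + y * ((A - C) + (D - B)))
    ∧ (N * (1 - y) * (a * A + b * B - (a * C + b * D))
        + K * (a - (a * y + b * x)) * ((C - D) + y * ((A - C) + (D - B))) = 0 → y = 1) := by
  have hR : 0 ≤ a - (a * y + b * x) := by linarith
  have hRle : a - (a * y + b * x) ≤ a * (1 - y) := by
    nlinarith [mul_nonneg hb hx]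
  have hA1 : 0 ≤ K * (a - (a * y + b * x)) * (y * ((A - C) + (D - B))) :=
    mul_nonneg (mul_nonneg hK hR) (mul_nonneg hy (by linarith))
  by_cases hCD : C < D
  · have h5 := hkBl hCD
    have hA2 : K * (a - (a * y + b * x)) * (D - C) ≤ K * (a * (1 - y)) * (D - C) :=
      mul_le_mul_of_nonneg_right (mul_le_mul_of_nonneg_left hRle hK) (by linarith)
    have hA3 : 0 ≤ (1 - y) * (N * (a * (A - C) + b * (B - D)) - K * (a * (D - C))) :=
      mul_nonneg (by linarith) (by linarith)
    constructor
    · nlinarith [hA1, hA2, hA3]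
    · intro hQe
      by_contra hyne
      have hylt : y < 1 := lt_of_le_of_ne hy1 hyne
      have hA3' : 0 < (1 - y) * (N * (a * (A - C) + b * (B - D)) - K * (a * (D - C))) :=
        mul_pos (by linarith) (by linarith)
      nlinarith [hA1, hA2, hA3']
  · push_neg at hCD
    have hS : 0 ≤ (C - D) + y * ((A - C) + (D - B)) := by
      nlinarith [mul_nonneg hy (by linarith : (0:ℝ) ≤ (A - C) + (D - B))]
    have hT2 : 0 ≤ K * (a - (a * y + b * x)) * ((C - D) + y * ((A - C) + (D - B))) :=
      mul_nonneg (mul_nonneg hK hR) hS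
    have hT1 : 0 ≤ N * (1 - y) * (a * A + b * B - (a * C + b * D)) :=
      mul_nonneg (mul_nonneg hN.le (by linarith)) (by linarith)
    constructor
    · linarith
    · intro hQe
      by_contra hyne
      have hylt : y < 1 := lt_of_le_of_ne hy1 hyne
      have hT1' : 0 < N * (1 - y) * (a * A + b * B - (a * C + b * D)) :=
        mul_pos (mul_pos hN (by linarith)) (by linarith)
      linarith

/-- h-side lemma: for any (β̄ℓ, β̄h) with β̄ℓ ≥ 0, β̄h ≥ 0 and
β̄h + (P(ℓ|h)/P(h|h))·β̄ℓ ≤ 1, a deviator with signal h gets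
u(β̄ℓ, β̄h | h) ≤ u(Σ* | h), with equality only at (0, 1). -/
theorem symmetric_deviation_h_side
    (PS : Bool → (Bool → ℝ) → ℝ) (cond : Bool → Bool → ℝ)
    (n k : ℕ) (hn : 2 ≤ n) (hk2 : 2 ≤ k) (hkn : k ≤ n)
    (hcondh : IsDist (cond true)) (hcondl : IsDist (cond false))
    (hcorr : cond false true < cond true true)
    (hpos1 : 0 < cond false true) (hpos2 : 0 < cond true false)
    -- PS is strictly proper
    (hstrict : ∀ p q : Bool → ℝ, IsDist p → IsDist q → p ≠ q →
        p true * PS true q + p false * PS false q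
          < p true * PS true p + p false * PS false p)
    -- the group size is at most the threshold k_B
    (hkB : (k : ℝ) ≤ kBthreshold PS cond n) :
    ∀ x y : ℝ, 0 ≤ x → 0 ≤ y →
      y + (cond true false / cond true true) * x ≤ 1 →
      uDevH PS cond n k x y ≤ uStarH PS cond
      ∧ (uDevH PS cond n k x y = uStarH PS cond → x = 0 ∧ y = 1) := by
  intro x y hx hy hcon
  have hab : cond true true + cond true false = 1 := hcondh.2.2
  have hab' : cond false true + cond false false = 1 := hcondl.2.2
  have ha : 0 < cond true true := lt_trans hpos1 hcorr
  have hb : 0 < cond true false := hpos2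
  have hpf : 0 < cond false false := by linarith
  have hne : cond true ≠ cond false := fun h => ne_of_gt hcorr (congrFun h true)
  have hEh := hstrict (cond true) (cond false) hcondh hcondl hne
  have hEl := hstrict (cond false) (cond true) hcondl hcondh hne.symm
  have hapf : cond true true * cond false false - cond true false * cond false true
      = cond true true - cond false true := by
    linear_combination (cond true true) * hab' - (cond false true) * hab
  have hkeyU : 0 < (cond true true * cond false false - cond true false * cond false true)
      * (PS true (cond true) - PS true (cond false)) := by
    nlinarith [mul_pos hpf (sub_pos.mpr hEh), mul_pos hb (sub_pos.mpr hEl)]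
  have hkeyV : 0 < (cond true true * cond false false - cond true false * cond false true)
      * (PS false (cond false) - PS false (cond true)) := by
    nlinarith [mul_pos hpos1 (sub_pos.mpr hEh), mul_pos ha (sub_pos.mpr hEl)]
  rw [hapf] at hkeyU hkeyV
  have hU : 0 < PS true (cond true) - PS true (cond false) := by
    rcases mul_pos_iff.mp hkeyU with ⟨_, h⟩ | ⟨h, _⟩
    · exact h
    · linarith
  have hv : 0 < PS false (cond false) - PS false (cond true) := by
    rcases mul_pos_iff.mp hkeyV with ⟨_, h⟩ | ⟨h, _⟩
    · exact h
    · linarith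
  have h2 : cond true true * y + cond true false * x ≤ cond true true := by
    have h := mul_le_mul_of_nonneg_left hcon ha.le
    rw [mul_one, mul_add] at h
    have h3 : cond true true * (cond true false / cond true true * x)
        = cond true false * x := by
      field_simp
    linarith
  have hy1 : y ≤ 1 := by nlinarith [h2, mul_nonneg hb.le hx]
  have hx0 : y = 1 → x = 0 := by
    intro h
    rw [h, mul_one] at h2
    have hbx : cond true false * x = 0 :=
      le_antisymm (by linarith) (mul_nonneg hb.le hx)
    exact (mul_eq_zero.mp hbx).resolve_left hb.ne'
  have hn1 : (0:ℝ) < (n : ℝ) - 1 := by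
    have : (2:ℝ) ≤ (n : ℝ) := by exact_mod_cast hn
    linarith
  have hk1 : (0:ℝ) ≤ (k : ℝ) - 1 := by
    have : (2:ℝ) ≤ (k : ℝ) := by exact_mod_cast hk2
    linarith
  have hb1 : cond true false = 1 - cond true true := by linarith
  -- the k_B^ℓ bound, in the only case where it is needed
  have hkBl : PS true (cond false) < PS false (cond false) →
      ((k : ℝ) - 1) * (cond true true * (PS false (cond false) - PS true (cond false)))
        < ((n : ℝ) - 1) * (cond true true * (PS true (cond true) - PS true (cond false))
            + cond true false * (PS false (cond true) - PS false (cond false))) := by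
    intro hCD
    have hkB' := hkB
    simp only [kBthreshold] at hkB'
    have h3 : (k : ℝ) ≤ ((⌈((n : ℝ) - 1) * (cond true true
          * (PS true (cond true) - PS true (cond false))
          + cond true false * (PS false (cond true) - PS false (cond false)))
          / (cond true true * (PS false (cond false) - PS true (cond false)))⌉ : ℤ) : ℝ) := by
      have := hkB'.trans ((min_le_left _ _).trans (min_le_right _ _))
      rwa [if_pos hCD] at this
    have had : 0 < cond true true * (PS false (cond false) - PS true (cond false)) :=
      mul_pos ha (by linarith)
    have h4 : ((k : ℝ) - 1) < ((n : ℝ) - 1) * (cond true true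
          * (PS true (cond true) - PS true (cond false))
          + cond true false * (PS false (cond true) - PS false (cond false)))
          / (cond true true * (PS false (cond false) - PS true (cond false))) := by
      have := Int.ceil_lt_add_one (((n : ℝ) - 1) * (cond true true
          * (PS true (cond true) - PS true (cond false))
          + cond true false * (PS false (cond true) - PS false (cond false)))
          / (cond true true * (PS false (cond false) - PS true (cond false))))
      linarith
    exact (lt_div_iff₀ had).mp h4
  -- the arithmetic core
  have hQ := aux_h_side_core (cond true true) (cond true false)
      (PS true (cond true)) (PS false (cond true))
      (PS true (cond false)) (PS false (cond false)) x y ((n : ℝ) - 1) ((k : ℝ) - 1)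
      hb.le hx hy h2 hy1 hn1 hk1 hU hv hEh hkBl
  -- the key algebraic identity
  have hident : ((n : ℝ) - 1) * (uStarH PS cond - uDevH PS cond n k x y)
      = ((n : ℝ) - 1) * (1 - y)
          * (cond true true * PS true (cond true) + cond true false * PS false (cond true)
            - (cond true true * PS true (cond false) + cond true false * PS false (cond false)))
        + ((k : ℝ) - 1) * (cond true true - (cond true true * y + cond true false * x))
          * ((PS true (cond false) - PS false (cond false))
            + y * ((PS true (cond true) - PS true (cond false))
                 + (PS false (cond false) - PS false (cond true)))) := by
    simp only [uStarH, uDevH, fH]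
    rw [hb1]
    field_simp
    ring
  constructor
  · have h6 : 0 ≤ ((n : ℝ) - 1) * (uStarH PS cond - uDevH PS cond n k x y) := by
      rw [hident]
      exact hQ.1
    nlinarith [h6]
  · intro heq
    rw [heq, sub_self, mul_zero] at hident
    have hyeq : y = 1 := hQ.2 hident.symm
    exact ⟨hx0 hyeq, hyeq⟩
end

section
/- For any (β̄_ℓ, β̄_h) ∈ ℝ² with β̄_ℓ ≤ 1, β̄_h ≤ 1, and β̄_h + (P(ℓ|ℓ)/P(h|ℓ))·β̄_ℓ ≥ 1, the interim expected utility u(β̄_ℓ, β̄_h | ℓ) of a deviator with signal ℓ under the symmetric deviation satisfies u(β̄_ℓ, β̄_h | ℓ) ≤ u(Σ* | ℓ), with equality only at (β̄_ℓ, β̄_h) = (0, 1). -/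
open scoped Classical

/-- `f^ℓ(β'_ℓ, (βℓ, βh))`: the expected score of an agent with signal ℓ who
reports h with probability `b'`, against a peer playing strategy
`(x, y) = (βℓ, βh)`.  `cond s' = P(·|s')`. -/
noncomputable def fL (PS : Bool → (Bool → ℝ) → ℝ) (cond : Bool → Bool → ℝ)
    (b' x y : ℝ) : ℝ :=
  b' * ((cond false true * y + cond false false * x) * PS true (cond true)
        + (1 - (cond false true * y + cond false false * x)) * PS false (cond true))
  + (1 - b') * ((cond false true * y + cond false false * x) * PS true (cond false)
        + (1 - (cond false true * y + cond false false * x)) * PS false (cond false))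

/-- Interim expected utility `u(βℓ, βh | ℓ)` of a deviator with signal ℓ when
all k deviators play the common strategy `(x, y)` and the other n−k agents are
truthful. -/
noncomputable def uDevL (PS : Bool → (Bool → ℝ) → ℝ) (cond : Bool → Bool → ℝ)
    (n k : ℕ) (x y : ℝ) : ℝ :=
  (((n : ℝ) - (k : ℝ)) / ((n : ℝ) - 1)) * fL PS cond x 0 1
    + (((k : ℝ) - 1) / ((n : ℝ) - 1)) * fL PS cond x x y

/-- Truthful interim expected utility conditioned on signal ℓ. -/
noncomputable def uStarL (PS : Bool → (Bool → ℝ) → ℝ)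
    (cond : Bool → Bool → ℝ) : ℝ :=
  cond false true * PS true (cond false) + cond false false * PS false (cond false)

private lemma core_l (plh pll a b c d x q Bq : ℝ)
    (hpl : plh + pll = 1) (hpll : 0 < pll) (hB : 0 < Bq)
    (hElpos : 0 < plh * (c - a) + pll * (d - b))
    (hS : c - d < a - b)
    (hkey : Bq * (pll * (a - b)) < plh * (c - a) + pll * (d - b))
    (hx : 0 < x) (hx1 : x ≤ 1)
    (hq1 : plh ≤ q) (hq2 : q ≤ plh + pll * x) :
    (1 - Bq) * (x * (plh * a + (1 - plh) * b) + (1 - x) * (plh * c + (1 - plh) * d))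
      + Bq * (x * (q * a + (1 - q) * b) + (1 - x) * (q * c + (1 - q) * d))
    < plh * c + pll * d := by
  have hpll' : pll = 1 - plh := by linarith
  subst hpll'
  rcases le_or_gt (x * (a - b) + (1 - x) * (c - d)) 0 with hσ | hσ
  · nlinarith [mul_pos hx hElpos,
      mul_nonneg (mul_nonneg hB.le (by linarith : (0:ℝ) ≤ q - plh))
        (by linarith : (0:ℝ) ≤ -(x * (a - b) + (1 - x) * (c - d)))]
  · nlinarith [mul_nonneg (mul_nonneg hB.le hσ.le)
        (by linarith : (0:ℝ) ≤ plh + (1 - plh) * x - q),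
      mul_nonneg (mul_nonneg (mul_nonneg (mul_nonneg hx.le hB.le)
        (by linarith : (0:ℝ) ≤ 1 - plh)) (by linarith : (0:ℝ) ≤ 1 - x))
        (by linarith : (0:ℝ) ≤ (a - b) - (c - d)),
      mul_pos hx (by linarith : (0:ℝ) < plh * (c - a) + (1 - plh) * (d - b)
        - Bq * ((1 - plh) * (a - b)))]

/-- ℓ-side lemma: for any (β̄ℓ, β̄h) with β̄ℓ ≤ 1, β̄h ≤ 1 and
β̄h + (P(ℓ|ℓ)/P(h|ℓ))·β̄ℓ ≥ 1, a deviator with signal ℓ gets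
u(β̄ℓ, β̄h | ℓ) ≤ u(Σ* | ℓ), with equality only at (0, 1). -/
theorem symmetric_deviation_l_side
    (PS : Bool → (Bool → ℝ) → ℝ) (cond : Bool → Bool → ℝ)
    (n k : ℕ) (hn : 2 ≤ n) (hk2 : 2 ≤ k) (hkn : k ≤ n)
    (hcondh : IsDist (cond true)) (hcondl : IsDist (cond false))
    (hcorr : cond false true < cond true true)
    (hpos1 : 0 < cond false true) (hpos2 : 0 < cond true false)
    -- PS is strictly proper
    (hstrict : ∀ p q : Bool → ℝ, IsDist p → IsDist q → p ≠ q →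
        p true * PS true q + p false * PS false q
          < p true * PS true p + p false * PS false p)
    -- the group size is at most the threshold k_B
    (hkB : (k : ℝ) ≤ kBthreshold PS cond n) :
    ∀ x y : ℝ, x ≤ 1 → y ≤ 1 →
      1 ≤ y + (cond false false / cond false true) * x →
      uDevL PS cond n k x y ≤ uStarL PS cond
      ∧ (uDevL PS cond n k x y = uStarL PS cond → x = 0 ∧ y = 1) := by
  intro x y hx1 hy1 hline
  obtain ⟨hph1, hph2, hph3⟩ := hcondh
  obtain ⟨hpl1, hpl2, hpl3⟩ := hcondl
  have hplh : 0 < cond false true := hpos1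
  have hpll : 0 < cond false false := by linarith
  have e1 : cond false false = 1 - cond false true := by linarith
  have e2 : cond true false = 1 - cond true true := by linarith
  have hN : (0:ℝ) < (n:ℝ) - 1 := by
    have : (2:ℝ) ≤ (n:ℝ) := by exact_mod_cast hn
    linarith
  have hN0 : ((n:ℝ) - 1) ≠ 0 := ne_of_gt hN
  have hk2' : (2:ℝ) ≤ (k:ℝ) := by exact_mod_cast hk2
  have hB : 0 < ((k:ℝ) - 1) / ((n:ℝ) - 1) := div_pos (by linarith) hN
  have hne : cond false ≠ cond true := fun h => absurd (congrFun h true) (ne_of_lt hcorr)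
  have hd1 := hstrict (cond false) (cond true) ⟨hpl1, hpl2, hpl3⟩ ⟨hph1, hph2, hph3⟩ hne
  have hd2 := hstrict (cond true) (cond false) ⟨hph1, hph2, hph3⟩ ⟨hpl1, hpl2, hpl3⟩ (Ne.symm hne)
  have hElpos : 0 < cond false true * (PS true (cond false) - PS true (cond true))
      + cond false false * (PS false (cond false) - PS false (cond true)) := by nlinarith [hd1]
  have hd1' := hd1; rw [e1] at hd1'
  have hd2' := hd2; rw [e2] at hd2'
  have hS : PS true (cond false) - PS false (cond false)
      < PS true (cond true) - PS false (cond true) := by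
    by_contra h
    push_neg at h
    nlinarith [hd1', hd2', mul_nonneg (by linarith : (0:ℝ) ≤ cond true true - cond false true)
      (by linarith : (0:ℝ) ≤ (PS true (cond false) - PS false (cond false))
        - (PS true (cond true) - PS false (cond true)))]
  have hkey : (((k:ℝ) - 1) / ((n:ℝ) - 1))
        * (cond false false * (PS true (cond true) - PS false (cond true)))
      < cond false true * (PS true (cond false) - PS true (cond true))
        + cond false false * (PS false (cond false) - PS false (cond true)) := by
    rcases lt_or_ge (PS false (cond true)) (PS true (cond true)) with hba | hba
    · simp only [kBthreshold] at hkB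
      have h5 := hkB.trans ((min_le_left _ _).trans (min_le_left _ _))
      rw [if_pos hba] at h5
      have h6 := h5.trans_lt (Int.ceil_lt_add_one _)
      have hden : 0 < cond false false * (PS true (cond true) - PS false (cond true)) :=
        mul_pos hpll (by linarith)
      have h7 := (lt_div_iff₀ hden).1 (by linarith :
        ((k:ℝ) - 1) < ((n:ℝ) - 1) * (cond false true * (PS true (cond false) - PS true (cond true))
          + cond false false * (PS false (cond false) - PS false (cond true)))
          / (cond false false * (PS true (cond true) - PS false (cond true))))
      rw [div_mul_eq_mul_div, div_lt_iff₀ hN]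
      linarith [h7]
    · have h7 : (((k:ℝ) - 1) / ((n:ℝ) - 1))
          * (cond false false * (PS true (cond true) - PS false (cond true))) ≤ 0 :=
        mul_nonpos_of_nonneg_of_nonpos hB.le
          (mul_nonpos_of_nonneg_of_nonpos hpll.le (by linarith))
      linarith [hElpos]
  have hx0 : 0 ≤ x := by
    by_contra hx
    push_neg at hx
    have : cond false false / cond false true * x < 0 :=
      mul_neg_of_pos_of_neg (div_pos hpll hplh) hx
    linarith
  rcases eq_or_lt_of_le hx0 with hx | hx
  · have hx' : x = 0 := hx.symm
    subst hx'
    have hy : y = 1 := by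
      have h0 : cond false false / cond false true * 0 = 0 := by ring
      rw [h0] at hline
      linarith
    subst hy
    have hEq : uDevL PS cond n k 0 1 = uStarL PS cond := by
      simp only [uDevL, fL, uStarL]
      rw [e1]
      field_simp
      ring
    exact ⟨le_of_eq hEq, fun _ => ⟨rfl, rfl⟩⟩
  · have hq1 : cond false true ≤ cond false true * y + cond false false * x := by
      have h2 : cond false true * (y + cond false false / cond false true * x)
          = cond false true * y + cond false false * x := by field_simp
      linarith [mul_le_mul_of_nonneg_left hline hplh.le, h2]
    have hq2 : cond false true * y + cond false false * x
        ≤ cond false true + cond false false * x := by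
      linarith [mul_le_mul_of_nonneg_left hy1 hplh.le]
    have hbridge : uDevL PS cond n k x y
        = (1 - ((k:ℝ) - 1) / ((n:ℝ) - 1))
            * (x * (cond false true * PS true (cond true)
                + (1 - cond false true) * PS false (cond true))
              + (1 - x) * (cond false true * PS true (cond false)
                + (1 - cond false true) * PS false (cond false)))
          + (((k:ℝ) - 1) / ((n:ℝ) - 1))
            * (x * ((cond false true * y + cond false false * x) * PS true (cond true)
                + (1 - (cond false true * y + cond false false * x)) * PS false (cond true))
              + (1 - x) * ((cond false true * y + cond false false * x) * PS true (cond false)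
                + (1 - (cond false true * y + cond false false * x)) * PS false (cond false))) := by
      simp only [uDevL, fL]
      rw [e1]
      field_simp
      ring
    have hmain : uDevL PS cond n k x y < uStarL PS cond := by
      rw [hbridge, uStarL]
      exact core_l (cond false true) (cond false false) (PS true (cond true))
        (PS false (cond true)) (PS true (cond false)) (PS false (cond false)) x
        (cond false true * y + cond false false * x) (((k:ℝ) - 1) / ((n:ℝ) - 1))
        hpl3 hpll hB hElpos hS hkey hx hx1 hq1 hq2
    exact ⟨hmain.le, fun hEq => absurd hEq (ne_of_lt hmain)⟩
end

section
/- Suppose k real pairs (xᵢ, yᵢ), i = 1..k, have averages x̄, ȳ, and not all yᵢ equal ȳ. Then there exist indices i with yᵢ ≥ ȳ and j with yⱼ < ȳ such that (yᵢ − ȳ)(x̄ − xⱼ) ≤ (xᵢ − x̄)(ȳ − yⱼ). -/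
/-- Given k real pairs (xᵢ, yᵢ) with averages x̄, ȳ, if not all
yᵢ equal ȳ, then there exist indices i with yᵢ ≥ ȳ and j with yⱼ < ȳ such
that (yᵢ − ȳ)(x̄ − xⱼ) ≤ (xᵢ − x̄)(ȳ − yⱼ). -/
theorem cross_product_pair_exists
    (k : ℕ)
    (x y : Fin k → ℝ)
    (xbar ybar : ℝ)
    (hx : xbar = (∑ i, x i) / (k : ℝ))
    (hy : ybar = (∑ i, y i) / (k : ℝ))
    (hne : ¬ ∀ i, y i = ybar) :
    ∃ i j, ybar ≤ y i ∧ y j < ybar ∧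
      (y i - ybar) * (xbar - x j) ≤ (x i - xbar) * (ybar - y j) := by
  rcases Nat.eq_zero_or_pos k with hk | hk
  · subst hk; exact absurd (fun i => i.elim0) hne
  have hk' : (k : ℝ) ≠ 0 := Nat.cast_ne_zero.mpr hk.ne'
  have hxsum : ∑ i, (x i - xbar) = 0 := by
    rw [Finset.sum_sub_distrib, Finset.sum_const, Finset.card_univ, Fintype.card_fin, hx, nsmul_eq_mul]
    field_simp; ring
  have hysum : ∑ i, (y i - ybar) = 0 := by
    rw [Finset.sum_sub_distrib, Finset.sum_const, Finset.card_univ, Fintype.card_fin, hy, nsmul_eq_mul]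
    field_simp; ring
  set A : Finset (Fin k) := Finset.univ.filter (fun i => ybar ≤ y i) with hA
  set B : Finset (Fin k) := Finset.univ.filter (fun i => y i < ybar) with hB
  have hsplit : ∀ f : Fin k → ℝ, ∑ i ∈ A, f i + ∑ i ∈ B, f i = ∑ i, f i := by
    intro f
    have := Finset.sum_filter_add_sum_filter_not Finset.univ (fun i => ybar ≤ y i) f
    simpa [hA, hB, not_le] using this
  have hS : ∑ i ∈ A, (y i - ybar) = ∑ j ∈ B, (ybar - y j) := by
    have h := hsplit (fun i => y i - ybar)
    rw [hysum] at h
    have : ∑ i ∈ B, (ybar - y i) = - ∑ i ∈ B, (y i - ybar) := by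
      rw [← Finset.sum_neg_distrib]; congr 1; ext i; ring
    linarith [this]
  have hT : ∑ i ∈ A, (x i - xbar) = ∑ j ∈ B, (xbar - x j) := by
    have h := hsplit (fun i => x i - xbar)
    rw [hxsum] at h
    have : ∑ i ∈ B, (xbar - x i) = - ∑ i ∈ B, (x i - xbar) := by
      rw [← Finset.sum_neg_distrib]; congr 1; ext i; ring
    linarith [this]
  -- B nonempty
  have hBne : B.Nonempty := by
    by_contra hB0
    rw [Finset.not_nonempty_iff_eq_empty] at hB0
    have hall : ∀ i, ybar ≤ y i := by
      intro i
      by_contra hlt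
      have : i ∈ B := by simp [hB, not_le.mp hlt]
      simp [hB0] at this
    apply hne
    intro i
    have h1 : 0 ≤ y i - ybar := by linarith [hall i]
    have h2 : y i - ybar = 0 := by
      by_contra h
      have hpos : 0 < y i - ybar := lt_of_le_of_ne h1 (Ne.symm h)
      have : 0 < ∑ j, (y j - ybar) :=
        Finset.sum_pos' (fun j _ => by linarith [hall j]) ⟨i, Finset.mem_univ i, hpos⟩
      linarith [hysum]
    linarith
  have hAne : A.Nonempty := by
    obtain ⟨j0, hj0⟩ := hBne
    have hj0' : y j0 < ybar := by simpa [hB] using hj0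
    by_contra hA0
    rw [Finset.not_nonempty_iff_eq_empty] at hA0
    have hall : ∀ i, y i < ybar := by
      intro i
      by_contra hge
      have : i ∈ A := by simp [hA, not_lt.mp hge]
      simp [hA0] at this
    have : ∑ j, (y j - ybar) < 0 := by
      apply Finset.sum_neg (fun j _ => by linarith [hall j]) ⟨j0, Finset.mem_univ j0⟩
    linarith [hysum]
  by_contra hcon
  push_neg at hcon
  have hstrict : ∑ p ∈ A ×ˢ B, (x p.1 - xbar) * (ybar - y p.2)
      < ∑ p ∈ A ×ˢ B, (y p.1 - ybar) * (xbar - x p.2) := by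
    apply Finset.sum_lt_sum_of_nonempty (hAne.product hBne)
    intro p hp
    rw [Finset.mem_product] at hp
    have h1 : ybar ≤ y p.1 := by have := hp.1; simpa [hA] using this
    have h2 : y p.2 < ybar := by have := hp.2; simpa [hB] using this
    exact hcon p.1 p.2 h1 h2
  have e1 : ∑ p ∈ A ×ˢ B, (x p.1 - xbar) * (ybar - y p.2)
      = (∑ i ∈ A, (x i - xbar)) * (∑ j ∈ B, (ybar - y j)) := by
    rw [Finset.sum_mul_sum, Finset.sum_product]
  have e2 : ∑ p ∈ A ×ˢ B, (y p.1 - ybar) * (xbar - x p.2)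
      = (∑ i ∈ A, (y i - ybar)) * (∑ j ∈ B, (xbar - x j)) := by
    rw [Finset.sum_mul_sum, Finset.sum_product]
  rw [e1, e2, hS, ← hT] at hstrict
  nlinarith [hstrict]
end
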